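/- arXiv:1912.06797 — 2 statements merged into one kernel-verified Lean document; each statement's English description precedes it below -/
import Mathlib

section
/- Let α₁, α₂ : ℕ → ℂ be functions such that the radial Toeplitz kernels T_{α₁} and T_{α₂} both induce bounded operators on ℓ²(V_κ). Then there exists a function β : ℕ → ℂ such that the radial Toeplitz kernel T_β induces a bounded operator on ℓ²(V_κ) and T_{α₁} T_{α₂} = T_β as bounded operators on ℓ²(V_κ). -/
set_option linter.unusedSectionVars false
set_option linter.unusedVariables false
set_option maxHeartbeats 1000000


open MeasureTheory

noncomputable section

namespace RadAux
open SimpleGraph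

variable {V : Type} [DecidableEq V] {G : SimpleGraph V}

attribute [local instance 10] Classical.propDecidable

lemma path_length_eq_dist (hconn : G.Connected) (hacyc : G.IsAcyclic)
    {u v : V} (p : G.Walk u v) (hp : p.IsPath) : p.length = G.dist u v := by
  obtain ⟨q, hq, hql⟩ := (hconn u v).exists_path_of_dist
  have h := hacyc.path_unique ⟨p, hp⟩ ⟨q, hq⟩
  rw [← hql]
  exact congrArg (fun r : G.Path u v => r.1.length) h

/-- adjacent vertices have distances to `t` differing by exactly one. -/
lemma adj_dist_dichotomy (hconn : G.Connected) (hacyc : G.IsAcyclic) (t : V)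
    {u w : V} (h : G.Adj u w) :
    G.dist t w = G.dist t u + 1 ∨ G.dist t u = G.dist t w + 1 := by
  have h1 : G.dist t w ≤ G.dist t u + 1 := by
    have := hconn.dist_triangle (u := t) (v := u) (w := w)
    rwa [(dist_eq_one_iff_adj).2 h] at this
  have h2 : G.dist t u ≤ G.dist t w + 1 := by
    have := hconn.dist_triangle (u := t) (v := w) (w := u)
    rwa [(dist_eq_one_iff_adj).2 h.symm] at this
  have hne : G.dist t u ≠ G.dist t w := by
    intro heq
    -- get a path from t to u
    obtain ⟨p, hp, hpl⟩ := (hconn t u).exists_path_of_dist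
    by_cases hw : w ∈ p.support
    · -- then the takeUntil is a path from t to w of length dist t w, and the rest has length 0
      have htake : (p.takeUntil w hw).length = G.dist t w :=
        path_length_eq_dist hconn hacyc _ (hp.takeUntil hw)
      have hspec := p.take_spec hw
      have hlen : (p.takeUntil w hw).length + (p.dropUntil w hw).length = p.length := by
        conv_rhs => rw [← hspec]
        rw [Walk.length_append]
      have : (p.dropUntil w hw).length = 0 := by omega
      have := Walk.eq_of_length_eq_zero this
      exact G.loopless.irrefl u (this ▸ h)
    · -- concat gives a path from t to w of length dist t u + 1 = dist t w , contradiction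
      have hcat : (p.concat h).IsPath := by
        have hrev : (p.concat h).reverse.IsPath := by
          rw [Walk.reverse_concat]
          exact (Walk.cons_isPath_iff _ _).2 ⟨(Walk.isPath_reverse_iff p).2 hp,
            by rwa [Walk.support_reverse, List.mem_reverse]⟩
        exact (Walk.isPath_reverse_iff _).1 hrev
      have := path_length_eq_dist hconn hacyc _ hcat
      rw [Walk.length_concat, hpl, heq] at this
      omega
  omega

/-- existence of a strictly closer neighbour. -/
lemma exists_closer (hconn : G.Connected) {t u : V} (hne : u ≠ t) :
    ∃ w, G.Adj u w ∧ G.dist t w + 1 = G.dist t u := by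
  obtain ⟨p, hp, hpl⟩ := (hconn t u).exists_path_of_dist
  have hlen : p.length ≠ 0 := by
    intro h0
    exact hne (Walk.eq_of_length_eq_zero h0).symm
  have hnil : ¬ p.reverse.Nil := by
    rw [Walk.nil_iff_length_eq, Walk.length_reverse]
    exact hlen
  obtain ⟨w, hadj, q, hq⟩ := Walk.not_nil_iff.mp hnil
  refine ⟨w, hadj, ?_⟩
  have h1 : G.dist t w ≤ q.reverse.length := dist_le q.reverse
  have h2 : q.length + 1 = p.length := by
    have := congrArg Walk.length hq
    rw [Walk.length_reverse] at this
    rw [Walk.length_cons] at this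
    omega
  rw [Walk.length_reverse] at h1
  have h3 : G.dist t u ≤ G.dist t w + 1 := by
    have := hconn.dist_triangle (u := t) (v := w) (w := u)
    rwa [(dist_eq_one_iff_adj).2 hadj.symm] at this
  omega



/-- uniqueness of the closer neighbour. -/
lemma closer_unique (hconn : G.Connected) (hacyc : G.IsAcyclic) {t u w₁ w₂ : V}
    (h1 : G.Adj u w₁) (hd1 : G.dist t w₁ + 1 = G.dist t u)
    (h2 : G.Adj u w₂) (hd2 : G.dist t w₂ + 1 = G.dist t u) : w₁ = w₂ := by
  obtain ⟨p₁, hp₁, hl₁⟩ := (hconn t w₁).exists_path_of_dist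
  obtain ⟨p₂, hp₂, hl₂⟩ := (hconn t w₂).exists_path_of_dist
  have hu₁ : u ∉ p₁.support := by
    intro hu
    have := path_length_eq_dist hconn hacyc _ (hp₁.takeUntil hu)
    have hle := p₁.length_takeUntil_le hu
    omega
  have hu₂ : u ∉ p₂.support := by
    intro hu
    have := path_length_eq_dist hconn hacyc _ (hp₂.takeUntil hu)
    have hle := p₂.length_takeUntil_le hu
    omega
  have hc₁ : (p₁.concat h1.symm).IsPath := by
    have hrev : (p₁.concat h1.symm).reverse.IsPath := by
      rw [Walk.reverse_concat]
      exact (Walk.cons_isPath_iff _ _).2 ⟨(Walk.isPath_reverse_iff p₁).2 hp₁,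
        by rwa [Walk.support_reverse, List.mem_reverse]⟩
    exact (Walk.isPath_reverse_iff _).1 hrev
  have hc₂ : (p₂.concat h2.symm).IsPath := by
    have hrev : (p₂.concat h2.symm).reverse.IsPath := by
      rw [Walk.reverse_concat]
      exact (Walk.cons_isPath_iff _ _).2 ⟨(Walk.isPath_reverse_iff p₂).2 hp₂,
        by rwa [Walk.support_reverse, List.mem_reverse]⟩
    exact (Walk.isPath_reverse_iff _).1 hrev
  have := hacyc.path_unique ⟨p₁.concat h1.symm, hc₁⟩ ⟨p₂.concat h2.symm, hc₂⟩
  have heq : p₁.concat h1.symm = p₂.concat h2.symm := congrArg Subtype.val this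
  obtain ⟨hv, -⟩ := Walk.concat_inj heq
  exact hv

/-- The neighbour of `u` one step closer to `t` (junk value `u` if `u = t` or unreachable). -/
def toward (G : SimpleGraph V) (t u : V) : V :=
  if h : ∃ w, G.Adj u w ∧ G.dist t w + 1 = G.dist t u then Classical.choose h else u

lemma toward_spec (hconn : G.Connected) {t u : V} (hne : u ≠ t) :
    G.Adj u (toward G t u) ∧ G.dist t (toward G t u) + 1 = G.dist t u := by
  have h := exists_closer hconn hne
  rw [toward, dif_pos h]
  exact Classical.choose_spec h

lemma toward_self (G : SimpleGraph V) (t : V) : toward G t t = t := by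
  rw [toward, dif_neg]
  rintro ⟨w, -, hd⟩
  rw [SimpleGraph.dist_self] at hd
  omega

lemma toward_eq (hconn : G.Connected) (hacyc : G.IsAcyclic) {t u w : V}
    (h : G.Adj u w) (hd : G.dist t w + 1 = G.dist t u) : toward G t u = w := by
  have hne : u ≠ t := by
    intro h'; subst h'; rw [SimpleGraph.dist_self] at hd; omega
  obtain ⟨ha, hdd⟩ := toward_spec hconn hne
  exact closer_unique hconn hacyc ha hdd h hd

/-- any neighbour other than `toward t u` is one step farther from `t`. -/
lemma dist_of_adj_ne_toward (hconn : G.Connected) (hacyc : G.IsAcyclic) {t u w : V}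
    (h : G.Adj u w) (hne : w ≠ toward G t u) : G.dist t w = G.dist t u + 1 := by
  rcases adj_dist_dichotomy hconn hacyc t h with h' | h'
  · exact h'
  · exact absurd (toward_eq hconn hacyc h h'.symm).symm hne

/-- a bijection between finite sets of the same size carrying a designated point. -/
lemma exists_bijOn_point {s t : Set V} (hs : s.Finite) (ht : t.Finite)
    (hcard : s.ncard = t.ncard) {a b : V} (ha : a ∈ s) (hb : b ∈ t) :
    ∃ f : V → V, Set.BijOn f s t ∧ f a = b := by
  have hc : hs.toFinset.card = ht.toFinset.card := by
    rwa [Set.ncard_eq_toFinset_card _ hs, Set.ncard_eq_toFinset_card _ ht] at hcard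
  let e0 : hs.toFinset ≃ ht.toFinset := Finset.equivOfCardEq hc
  let e : hs.toFinset ≃ ht.toFinset :=
    e0.trans (Equiv.swap (e0 ⟨a, hs.mem_toFinset.2 ha⟩) ⟨b, ht.mem_toFinset.2 hb⟩)
  classical
  refine ⟨fun v => if h : v ∈ s then (e ⟨v, hs.mem_toFinset.2 h⟩ : V) else v, ⟨?_, ?_, ?_⟩, ?_⟩
  · intro v hv
    have hfv : (if h : v ∈ s then (e ⟨v, hs.mem_toFinset.2 h⟩ : V) else v)
        = (e ⟨v, hs.mem_toFinset.2 hv⟩ : V) := dif_pos hv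
    show (if h : v ∈ s then (e ⟨v, hs.mem_toFinset.2 h⟩ : V) else v) ∈ t
    rw [hfv]
    exact ht.mem_toFinset.1 (e ⟨v, hs.mem_toFinset.2 hv⟩).2
  · intro v hv w hw hvw
    have hfv : (if h : v ∈ s then (e ⟨v, hs.mem_toFinset.2 h⟩ : V) else v)
        = (e ⟨v, hs.mem_toFinset.2 hv⟩ : V) := dif_pos hv
    have hfw : (if h : w ∈ s then (e ⟨w, hs.mem_toFinset.2 h⟩ : V) else w)
        = (e ⟨w, hs.mem_toFinset.2 hw⟩ : V) := dif_pos hw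
    simp only at hvw
    rw [hfv, hfw] at hvw
    have h2 := e.injective (Subtype.ext hvw)
    exact congrArg Subtype.val h2
  · intro w hw
    set v : V := (e.symm ⟨w, ht.mem_toFinset.2 hw⟩ : V) with hv
    have hmem : v ∈ s := hs.mem_toFinset.1 (e.symm ⟨w, ht.mem_toFinset.2 hw⟩).2
    refine ⟨v, hmem, ?_⟩
    have hfv : (if h : v ∈ s then (e ⟨v, hs.mem_toFinset.2 h⟩ : V) else v)
        = (e ⟨v, hs.mem_toFinset.2 hmem⟩ : V) := dif_pos hmem
    show (if h : v ∈ s then (e ⟨v, hs.mem_toFinset.2 h⟩ : V) else v) = w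
    rw [hfv]
    have h3 : (⟨v, hs.mem_toFinset.2 hmem⟩ : hs.toFinset) = e.symm ⟨w, ht.mem_toFinset.2 hw⟩ :=
      Subtype.ext rfl
    rw [h3, Equiv.apply_symm_apply]
  · have hfa : (if h : a ∈ s then (e ⟨a, hs.mem_toFinset.2 h⟩ : V) else a)
        = (e ⟨a, hs.mem_toFinset.2 ha⟩ : V) := dif_pos ha
    show (if h : a ∈ s then (e ⟨a, hs.mem_toFinset.2 h⟩ : V) else a) = b
    rw [hfa]
    show ((e0.trans (Equiv.swap (e0 ⟨a, hs.mem_toFinset.2 ha⟩) ⟨b, ht.mem_toFinset.2 hb⟩))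
      ⟨a, hs.mem_toFinset.2 ha⟩ : V) = b
    rw [Equiv.trans_apply, Equiv.swap_apply_left]



/-- a bijection between finite sets of the same size. -/
lemma exists_bijOn {s t : Set V} (hs : s.Finite) (ht : t.Finite)
    (hcard : s.ncard = t.ncard) : ∃ f : V → V, Set.BijOn f s t := by
  rcases s.eq_empty_or_nonempty with rfl | ⟨a, ha⟩
  · have ht0 : t = ∅ := by
      rw [← Set.ncard_eq_zero ht, ← hcard, Set.ncard_empty]
    subst ht0
    exact ⟨id, Set.bijOn_empty _⟩
  · have htne : t.Nonempty := by
      rw [← Set.ncard_pos ht, ← hcard]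
      exact (Set.ncard_pos hs).2 ⟨a, ha⟩
    obtain ⟨b, hb⟩ := htne
    obtain ⟨f, hf, -⟩ := exists_bijOn_point hs ht hcard ha hb
    exact ⟨f, hf⟩

/-- the set of "children directions" at `u` (all neighbours except the one toward `x`). -/
def sSet (G : SimpleGraph V) (x u : V) : Set V := G.neighborSet u \ {toward G x u}

def tSet (G : SimpleGraph V) (u' p' : V) : Set V := G.neighborSet u' \ {p'}

def cond (G : SimpleGraph V) (x u u' p' : V) : Prop :=
  (sSet G x u).Finite ∧ (tSet G u' p').Finite ∧ (sSet G x u).ncard = (tSet G u' p').ncard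

def cond₂ (G : SimpleGraph V) (x y y' u u' p' : V) : Prop :=
  toward G y u ∈ sSet G x u ∧ toward G y' u' ∈ tSet G u' p'

def Fex (G : SimpleGraph V) (x y y' u u' p' : V) : V → V :=
  if h : cond G x u u' p' then
    if h2 : cond₂ G x y y' u u' p' then
      Classical.choose (exists_bijOn_point h.1 h.2.1 h.2.2 h2.1 h2.2)
    else
      Classical.choose (exists_bijOn h.1 h.2.1 h.2.2)
  else id

lemma Fex_bijOn {x y y' u u' p' : V} (h : cond G x u u' p') :
    Set.BijOn (Fex G x y y' u u' p') (sSet G x u) (tSet G u' p') := by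
  rw [Fex, dif_pos h]
  split_ifs with h2
  · exact (Classical.choose_spec (exists_bijOn_point h.1 h.2.1 h.2.2 h2.1 h2.2)).1
  · exact Classical.choose_spec (exists_bijOn h.1 h.2.1 h.2.2)

lemma Fex_point {x y y' u u' p' : V} (h : cond G x u u' p') (h2 : cond₂ G x y y' u u' p') :
    Fex G x y y' u u' p' (toward G y u) = toward G y' u' := by
  rw [Fex, dif_pos h, dif_pos h2]
  exact (Classical.choose_spec (exists_bijOn_point h.1 h.2.1 h.2.2 h2.1 h2.2)).2


/-- the recursively-defined level-preserving map of the tree. -/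
def gg (hconn : G.Connected) (x x' y y' : V) (v : V) : V × V :=
  if hv : v = x then (x', x')
  else
    have hlt : G.dist x (toward G x v) < G.dist x v := by
      have h := (toward_spec hconn hv).2
      omega
    let r := gg hconn x x' y y' (toward G x v)
    (Fex G x y y' (toward G x v) r.1 r.2 v, r.1)
termination_by G.dist x v

lemma gg_x (hconn : G.Connected) (x x' y y' : V) : gg hconn x x' y y' x = (x', x') := by
  rw [gg, dif_pos rfl]

lemma gg_ne (hconn : G.Connected) (x x' y y' : V) {v : V} (hv : v ≠ x) :
    gg hconn x x' y y' v =
      (Fex G x y y' (toward G x v) (gg hconn x x' y y' (toward G x v)).1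
        (gg hconn x x' y y' (toward G x v)).2 v,
       (gg hconn x x' y y' (toward G x v)).1) := by
  conv_lhs => rw [gg]
  rw [dif_neg hv]


lemma nbr_finite {κ : ℕ} (hdeg : ∀ v : V, (G.neighborSet v).ncard = κ + 1) (v : V) :
    (G.neighborSet v).Finite := by
  by_contra h
  have := Set.Infinite.ncard h
  rw [hdeg v] at this
  omega

lemma gg_cond (hconn : G.Connected) (hacyc : G.IsAcyclic) {κ : ℕ}
    (hdeg : ∀ v : V, (G.neighborSet v).ncard = κ + 1) (x x' y y' : V) {u : V}
    (hux : u = x → (gg hconn x x' y y' u).2 = (gg hconn x x' y y' u).1)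
    (hadj : u ≠ x → G.Adj (gg hconn x x' y y' u).1 (gg hconn x x' y y' u).2) :
    cond G x u (gg hconn x x' y y' u).1 (gg hconn x x' y y' u).2 := by
  by_cases h : u = x
  · have h2 := hux h
    have hs : sSet G x u = G.neighborSet u := by
      rw [sSet, h, toward_self, Set.diff_singleton_eq_self]
      intro hmem
      exact G.loopless.irrefl x hmem
    have ht : tSet G (gg hconn x x' y y' u).1 (gg hconn x x' y y' u).2
        = G.neighborSet (gg hconn x x' y y' u).1 := by
      rw [tSet, h2, Set.diff_singleton_eq_self]
      intro hmem
      exact G.loopless.irrefl _ hmem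
    refine ⟨?_, ?_, ?_⟩
    · rw [hs]; exact nbr_finite hdeg u
    · rw [ht]; exact nbr_finite hdeg _
    · rw [hs, ht, hdeg, hdeg]
  · have hadj' := hadj h
    have htow : toward G x u ∈ G.neighborSet u := (toward_spec hconn h).1
    have hmem' : (gg hconn x x' y y' u).2 ∈ G.neighborSet (gg hconn x x' y y' u).1 := hadj'
    refine ⟨?_, ?_, ?_⟩
    · exact (nbr_finite hdeg u).diff
    · exact (nbr_finite hdeg _).diff
    · rw [sSet, tSet, Set.ncard_diff_singleton_of_mem htow,
        Set.ncard_diff_singleton_of_mem hmem', hdeg, hdeg]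

lemma gg_main (hconn : G.Connected) (hacyc : G.IsAcyclic) {κ : ℕ}
    (hdeg : ∀ v : V, (G.neighborSet v).ncard = κ + 1) (x x' y y' : V) :
    ∀ n : ℕ, ∀ v : V, G.dist x v = n →
      G.dist x' (gg hconn x x' y y' v).1 = n ∧
      (v ≠ x → G.Adj (gg hconn x x' y y' v).1 (gg hconn x x' y y' v).2 ∧
        (gg hconn x x' y y' v).2 = (gg hconn x x' y y' (toward G x v)).1) := by
  intro n
  induction n using Nat.strong_induction_on with
  | _ n IH =>
  intro v hv
  by_cases hvx : v = x
  · subst hvx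
    rw [SimpleGraph.dist_self] at hv
    rw [gg_x, ← hv, SimpleGraph.dist_self]
    exact ⟨rfl, fun hne => absurd rfl hne⟩
  · have hspec := toward_spec hconn hvx
    have hn1 : 1 ≤ n := by
      by_contra hcon
      have h0 : n = 0 := by omega
      exact hvx (hconn.dist_eq_zero_iff.1 (by rw [hv, h0])).symm
    have hu_dist : G.dist x (toward G x v) = n - 1 := by omega
    have IHu := IH (n-1) (by omega) (toward G x v) hu_dist
    have hcond : cond G x (toward G x v) (gg hconn x x' y y' (toward G x v)).1
        (gg hconn x x' y y' (toward G x v)).2 := by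
      apply gg_cond hconn hacyc hdeg
      · intro h; rw [h, gg_x]
      · intro h; exact (IHu.2 h).1
    have hbij := Fex_bijOn (y := y) (y' := y') hcond
    have hvmem : v ∈ sSet G x (toward G x v) := by
      constructor
      · exact hspec.1.symm
      · intro hmem
        rw [Set.mem_singleton_iff] at hmem
        by_cases hux : toward G x v = x
        · rw [hux, toward_self] at hmem
          exact hvx hmem
        · have := (toward_spec hconn hux).2
          rw [hmem] at hv
          omega
    have him := hbij.1 hvmem
    rw [gg_ne hconn x x' y y' hvx]
    have himadj : G.Adj (gg hconn x x' y y' (toward G x v)).1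
        (Fex G x y y' (toward G x v) (gg hconn x x' y y' (toward G x v)).1
          (gg hconn x x' y y' (toward G x v)).2 v) := him.1
    have himne : (Fex G x y y' (toward G x v) (gg hconn x x' y y' (toward G x v)).1
          (gg hconn x x' y y' (toward G x v)).2 v)
        ≠ (gg hconn x x' y y' (toward G x v)).2 := by
      intro h2
      exact him.2 (Set.mem_singleton_iff.2 h2)
    have htow' : toward G x' (gg hconn x x' y y' (toward G x v)).1
        = (gg hconn x x' y y' (toward G x v)).2 := by
      by_cases hux : toward G x v = x
      · rw [hux, gg_x]
        exact toward_self G x'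
      · have h2 := IHu.2 hux
        have hn2 : 2 ≤ n := by
          have := (toward_spec hconn hux).2
          rw [hu_dist] at this
          omega
        have hdist2 : G.dist x (toward G x (toward G x v)) = n - 2 := by
          have := (toward_spec hconn hux).2
          rw [hu_dist] at this
          omega
        have IHuu := IH (n-2) (by omega) (toward G x (toward G x v)) hdist2
        have hd22 : G.dist x' (gg hconn x x' y y' (toward G x v)).2 = n - 2 := by
          rw [h2.2]; exact IHuu.1
        apply toward_eq hconn hacyc h2.1
        rw [hd22, IHu.1]; omega
    constructor
    · show G.dist x' (Fex G x y y' (toward G x v) _ _ v) = n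
      have hstep := dist_of_adj_ne_toward hconn hacyc himadj (by rw [htow']; exact himne)
      rw [hstep, IHu.1]
      omega
    · intro _
      refine ⟨himadj.symm, rfl⟩

/-- for `v ≠ x`, the image of the parent is the parent of the image. -/
lemma gg_toward (hconn : G.Connected) (hacyc : G.IsAcyclic) {κ : ℕ}
    (hdeg : ∀ v : V, (G.neighborSet v).ncard = κ + 1) (x x' y y' : V) {v : V} (hvx : v ≠ x) :
    toward G x' (gg hconn x x' y y' v).1 = (gg hconn x x' y y' v).2 := by
  have hspec := toward_spec hconn hvx
  have h1 := gg_main hconn hacyc hdeg x x' y y' (G.dist x v) v rfl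
  have h2 := gg_main hconn hacyc hdeg x x' y y' (G.dist x (toward G x v)) (toward G x v) rfl
  apply toward_eq hconn hacyc (h1.2 hvx).1
  rw [(h1.2 hvx).2, h2.1, h1.1]
  omega


lemma gg_child (hconn : G.Connected) (hacyc : G.IsAcyclic) (x x' y y' : V) {u w : V}
    (hw : w ∈ sSet G x u) :
    toward G x w = u ∧ w ≠ x ∧
    (gg hconn x x' y y' w).1 = Fex G x y y' u (gg hconn x x' y y' u).1
      (gg hconn x x' y y' u).2 w := by
  obtain ⟨hadj, hne⟩ := hw
  rw [SimpleGraph.mem_neighborSet] at hadj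
  have hne' : w ≠ toward G x u := by
    intro h; exact hne (Set.mem_singleton_iff.2 h)
  have hdist : G.dist x w = G.dist x u + 1 := dist_of_adj_ne_toward hconn hacyc hadj hne'
  have htow : toward G x w = u := toward_eq hconn hacyc hadj.symm (by omega)
  have hwx : w ≠ x := by
    intro h; rw [h, SimpleGraph.dist_self] at hdist; omega
  refine ⟨htow, hwx, ?_⟩
  rw [gg_ne hconn x x' y y' hwx, htow]

lemma gg_bijOn_children (hconn : G.Connected) (hacyc : G.IsAcyclic) {κ : ℕ}
    (hdeg : ∀ v : V, (G.neighborSet v).ncard = κ + 1) (x x' y y' : V) (u : V) :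
    Set.BijOn (fun w => (gg hconn x x' y y' w).1) (sSet G x u)
      (tSet G (gg hconn x x' y y' u).1 (gg hconn x x' y y' u).2) := by
  have hcond : cond G x u (gg hconn x x' y y' u).1 (gg hconn x x' y y' u).2 := by
    apply gg_cond hconn hacyc hdeg
    · intro h; rw [h, gg_x]
    · intro h
      exact ((gg_main hconn hacyc hdeg x x' y y' (G.dist x u) u rfl).2 h).1
  exact (Fex_bijOn (y := y) (y' := y') hcond).congr
    (fun w hw => ((gg_child hconn hacyc x x' y y' hw).2.2).symm)

lemma gg_injective (hconn : G.Connected) (hacyc : G.IsAcyclic) {κ : ℕ}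
    (hdeg : ∀ v : V, (G.neighborSet v).ncard = κ + 1) (x x' y y' : V) :
    Function.Injective (fun v => (gg hconn x x' y y' v).1) := by
  suffices h : ∀ n : ℕ, ∀ a b : V, G.dist x a = n → G.dist x b = n →
      (gg hconn x x' y y' a).1 = (gg hconn x x' y y' b).1 → a = b by
    intro a b hab
    have ha := (gg_main hconn hacyc hdeg x x' y y' (G.dist x a) a rfl).1
    have hb := (gg_main hconn hacyc hdeg x x' y y' (G.dist x b) b rfl).1
    simp only at hab
    have : G.dist x a = G.dist x b := by rw [← ha, ← hb, hab]
    exact h (G.dist x a) a b rfl this.symm hab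
  intro n
  induction n using Nat.strong_induction_on with
  | _ n IH =>
  intro a b ha hb hab
  by_cases hn : n = 0
  · rw [hn] at ha hb
    rw [← hconn.dist_eq_zero_iff.1 ha, ← hconn.dist_eq_zero_iff.1 hb]
  · have hax : a ≠ x := by intro h; rw [h, SimpleGraph.dist_self] at ha; omega
    have hbx : b ≠ x := by intro h; rw [h, SimpleGraph.dist_self] at hb; omega
    have hta := gg_toward hconn hacyc hdeg x x' y y' hax
    have htb := gg_toward hconn hacyc hdeg x x' y y' hbx
    have hparents : (gg hconn x x' y y' (toward G x a)).1
        = (gg hconn x x' y y' (toward G x b)).1 := by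
      have h2a := ((gg_main hconn hacyc hdeg x x' y y' n a ha).2 hax).2
      have h2b := ((gg_main hconn hacyc hdeg x x' y y' n b hb).2 hbx).2
      rw [← h2a, ← h2b, ← hta, ← htb, hab]
    have hda : G.dist x (toward G x a) = n - 1 := by
      have := (toward_spec hconn hax).2; omega
    have hdb : G.dist x (toward G x b) = n - 1 := by
      have := (toward_spec hconn hbx).2; omega
    have hpar : toward G x a = toward G x b :=
      IH (n-1) (by omega) _ _ hda hdb hparents
    have hmem_a : a ∈ sSet G x (toward G x a) := by
      refine ⟨(toward_spec hconn hax).1.symm, ?_⟩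
      intro hmem
      rw [Set.mem_singleton_iff] at hmem
      by_cases hux : toward G x a = x
      · rw [hux, toward_self] at hmem; exact hax hmem
      · have := (toward_spec hconn hux).2
        rw [hmem] at ha
        omega
    have hmem_b : b ∈ sSet G x (toward G x a) := by
      rw [hpar]
      refine ⟨(toward_spec hconn hbx).1.symm, ?_⟩
      intro hmem
      rw [Set.mem_singleton_iff] at hmem
      by_cases hux : toward G x b = x
      · rw [hux, toward_self] at hmem; exact hbx hmem
      · have := (toward_spec hconn hux).2
        rw [hmem] at hb
        omega
    exact (gg_bijOn_children hconn hacyc hdeg x x' y y' (toward G x a)).2.1 hmem_a hmem_b hab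

lemma gg_surjective (hconn : G.Connected) (hacyc : G.IsAcyclic) {κ : ℕ}
    (hdeg : ∀ v : V, (G.neighborSet v).ncard = κ + 1) (x x' y y' : V) :
    Function.Surjective (fun v => (gg hconn x x' y y' v).1) := by
  suffices h : ∀ n : ℕ, ∀ w : V, G.dist x' w = n → ∃ v, (gg hconn x x' y y' v).1 = w by
    intro w; exact h (G.dist x' w) w rfl
  intro n
  induction n using Nat.strong_induction_on with
  | _ n IH =>
  intro w hw
  by_cases hn : n = 0
  · refine ⟨x, ?_⟩
    rw [gg_x]
    rw [hn] at hw
    exact hconn.dist_eq_zero_iff.1 hw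
  · have hwx : w ≠ x' := by intro h; rw [h, SimpleGraph.dist_self] at hw; omega
    have hspec := toward_spec hconn hwx
    have hd : G.dist x' (toward G x' w) = n - 1 := by omega
    obtain ⟨u, hu⟩ := IH (n-1) (by omega) (toward G x' w) hd
    have hdxu : G.dist x u = n - 1 := by
      have := (gg_main hconn hacyc hdeg x x' y y' (G.dist x u) u rfl).1
      rw [hu] at this
      omega
    have hmem : w ∈ tSet G (gg hconn x x' y y' u).1 (gg hconn x x' y y' u).2 := by
      constructor
      · rw [SimpleGraph.mem_neighborSet, hu]
        exact hspec.1.symm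
      · intro hmem
        rw [Set.mem_singleton_iff] at hmem
        by_cases hux : u = x
        · have : (gg hconn x x' y y' u).2 = x' := by rw [hux, gg_x]
          rw [this] at hmem
          exact hwx hmem
        · have h2 := ((gg_main hconn hacyc hdeg x x' y y' (n-1) u hdxu).2 hux).2
          have hd2 : G.dist x (toward G x u) = n - 2 := by
            have := (toward_spec hconn hux).2
            have h1 : 1 ≤ n - 1 := by
              by_contra hc
              have : G.dist x u = 0 := by omega
              exact hux (hconn.dist_eq_zero_iff.1 this).symm
            omega
          have := (gg_main hconn hacyc hdeg x x' y y' (n-2) (toward G x u) hd2).1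
          rw [← h2] at this
          rw [hmem] at hw
          have h1 : 1 ≤ n - 1 := by
            by_contra hc
            have h0 : G.dist x u = 0 := by omega
            exact hux (hconn.dist_eq_zero_iff.1 h0).symm
          omega
    obtain ⟨v, hv, hveq⟩ := (gg_bijOn_children hconn hacyc hdeg x x' y y' u).2.2 hmem
    exact ⟨v, hveq⟩


lemma gg_adj (hconn : G.Connected) (hacyc : G.IsAcyclic) {κ : ℕ}
    (hdeg : ∀ v : V, (G.neighborSet v).ncard = κ + 1) (x x' y y' : V) {a b : V}
    (h : G.Adj a b) : G.Adj (gg hconn x x' y y' a).1 (gg hconn x x' y y' b).1 := by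
  have main : ∀ a b : V, G.Adj a b → G.dist x b + 1 = G.dist x a →
      G.Adj (gg hconn x x' y y' a).1 (gg hconn x x' y y' b).1 := by
    intro a b hadj hd
    have hax : a ≠ x := by
      intro h'; rw [h', SimpleGraph.dist_self] at hd; omega
    have htow : toward G x a = b := toward_eq hconn hacyc hadj hd
    have h2 := (gg_main hconn hacyc hdeg x x' y y' (G.dist x a) a rfl).2 hax
    rw [htow] at h2
    exact h2.2 ▸ h2.1
  rcases adj_dist_dichotomy hconn hacyc x h with hd | hd
  · exact (main b a h.symm hd.symm).symm
  · exact main a b h hd.symm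

lemma gg_adj_rev (hconn : G.Connected) (hacyc : G.IsAcyclic) {κ : ℕ}
    (hdeg : ∀ v : V, (G.neighborSet v).ncard = κ + 1) (x x' y y' : V) {a b : V}
    (h : G.Adj (gg hconn x x' y y' a).1 (gg hconn x x' y y' b).1) : G.Adj a b := by
  have main : ∀ a b : V,
      G.Adj (gg hconn x x' y y' a).1 (gg hconn x x' y y' b).1 →
      G.dist x' (gg hconn x x' y y' b).1 + 1 = G.dist x' (gg hconn x x' y y' a).1 →
      G.Adj a b := by
    intro a b hadj hd
    have hax : a ≠ x := by
      intro h'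
      rw [h'] at hd
      rw [gg_x] at hd
      rw [SimpleGraph.dist_self] at hd
      omega
    have htow : toward G x' (gg hconn x x' y y' a).1 = (gg hconn x x' y y' b).1 :=
      toward_eq hconn hacyc hadj hd
    have h2 := gg_toward hconn hacyc hdeg x x' y y' hax
    have h3 := ((gg_main hconn hacyc hdeg x x' y y' (G.dist x a) a rfl).2 hax).2
    have : (gg hconn x x' y y' (toward G x a)).1 = (gg hconn x x' y y' b).1 := by
      rw [← h3, ← h2, htow]
    have hb : toward G x a = b := gg_injective hconn hacyc hdeg x x' y y' this
    rw [← hb]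
    exact (toward_spec hconn hax).1
  rcases adj_dist_dichotomy hconn hacyc x' h with hd | hd
  · exact (main b a h.symm hd.symm).symm
  · exact main a b h hd.symm

lemma gg_dist (hconn : G.Connected) (hacyc : G.IsAcyclic) {κ : ℕ}
    (hdeg : ∀ v : V, (G.neighborSet v).ncard = κ + 1) (x x' y y' : V) (a b : V) :
    G.dist (gg hconn x x' y y' a).1 (gg hconn x x' y y' b).1 = G.dist a b := by
  have e : V ≃ V := Equiv.ofBijective (fun v => (gg hconn x x' y y' v).1)
    ⟨gg_injective hconn hacyc hdeg x x' y y', gg_surjective hconn hacyc hdeg x x' y y'⟩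
  let f : G →g G := ⟨fun v => (gg hconn x x' y y' v).1,
    fun h => gg_adj hconn hacyc hdeg x x' y y' h⟩
  have h1 : G.dist (gg hconn x x' y y' a).1 (gg hconn x x' y y' b).1 ≤ G.dist a b := by
    obtain ⟨p, hp⟩ := (hconn a b).exists_walk_length_eq_dist
    have := SimpleGraph.dist_le (p.map f)
    rwa [SimpleGraph.Walk.length_map, hp] at this
  have h2 : G.dist a b ≤ G.dist (gg hconn x x' y y' a).1 (gg hconn x x' y y' b).1 := by
    have hbij : Function.Bijective (fun v => (gg hconn x x' y y' v).1) :=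
      ⟨gg_injective hconn hacyc hdeg x x' y y', gg_surjective hconn hacyc hdeg x x' y y'⟩
    let iso : G ≃g G :=
      { toEquiv := Equiv.ofBijective (fun v => (gg hconn x x' y y' v).1) hbij,
        map_rel_iff' := by
          intro u v
          exact ⟨fun h => gg_adj_rev hconn hacyc hdeg x x' y y' h,
            fun h => gg_adj hconn hacyc hdeg x x' y y' h⟩ }
    obtain ⟨q, hq⟩ :=
      (hconn (gg hconn x x' y y' a).1 (gg hconn x x' y y' b).1).exists_walk_length_eq_dist
    have ha : iso.symm.toHom (gg hconn x x' y y' a).1 = a :=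
      Equiv.ofBijective_symm_apply_apply _ hbij a
    have hb : iso.symm.toHom (gg hconn x x' y y' b).1 = b :=
      Equiv.ofBijective_symm_apply_apply _ hbij b
    have := SimpleGraph.dist_le ((q.map iso.symm.toHom).copy ha hb)
    rwa [SimpleGraph.Walk.length_copy, SimpleGraph.Walk.length_map, hq] at this
  omega


lemma getVert_dist (hconn : G.Connected) {x y : V} (w : G.Walk x y)
    (hw : w.length = G.dist x y) (k : ℕ) (hk : k ≤ w.length) :
    G.dist x (w.getVert k) = k ∧ G.dist (w.getVert k) y = w.length - k := by
  have h1 : ∀ k, k ≤ w.length → G.dist x (w.getVert k) ≤ k := by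
    intro k
    induction k with
    | zero => intro _; rw [SimpleGraph.Walk.getVert_zero, SimpleGraph.dist_self]
    | succ j ih =>
      intro hj
      have hadj := w.adj_getVert_succ (by omega : j < w.length)
      have htri := hconn.dist_triangle (u := x) (v := w.getVert j) (w := w.getVert (j+1))
      rw [SimpleGraph.dist_eq_one_iff_adj.2 hadj] at htri
      have := ih (by omega)
      omega
  have h2 : ∀ j, j ≤ w.length → G.dist (w.getVert (w.length - j)) y ≤ j := by
    intro j
    induction j with
    | zero =>
      intro _
      rw [Nat.sub_zero, SimpleGraph.Walk.getVert_length, SimpleGraph.dist_self]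
    | succ j ih =>
      intro hj
      have hadj := w.adj_getVert_succ (by omega : w.length - (j+1) < w.length)
      have hidx : w.length - (j+1) + 1 = w.length - j := by omega
      rw [hidx] at hadj
      have htri := hconn.dist_triangle (u := w.getVert (w.length - (j+1)))
        (v := w.getVert (w.length - j)) (w := y)
      rw [SimpleGraph.dist_eq_one_iff_adj.2 hadj] at htri
      have := ih (by omega)
      omega
  have ha := h1 k hk
  have hb := h2 (w.length - k) (by omega)
  rw [show w.length - (w.length - k) = k from by omega] at hb
  have htri := hconn.dist_triangle (u := x) (v := w.getVert k) (w := y)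
  rw [← hw] at htri
  omega

lemma gg_path (hconn : G.Connected) (hacyc : G.IsAcyclic) {κ : ℕ}
    (hdeg : ∀ v : V, (G.neighborSet v).ncard = κ + 1) (x x' y y' : V)
    (hd : G.dist x y = G.dist x' y') : (gg hconn x x' y y' y).1 = y' := by
  obtain ⟨w, hw⟩ := (hconn x y).exists_walk_length_eq_dist
  obtain ⟨w', hw'⟩ := (hconn x' y').exists_walk_length_eq_dist
  have hww' : w'.length = w.length := by rw [hw, hw', hd]
  have claim : ∀ k, k ≤ w.length → (gg hconn x x' y y' (w.getVert k)).1 = w'.getVert k := by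
    intro k
    induction k with
    | zero =>
      intro _
      rw [SimpleGraph.Walk.getVert_zero, SimpleGraph.Walk.getVert_zero, gg_x]
    | succ j IHj =>
      intro hk
      have hIH := IHj (by omega)
      have hdj := getVert_dist hconn w hw j (by omega)
      have hdj1 := getVert_dist hconn w hw (j+1) hk
      have hdj' := getVert_dist hconn w' hw' j (by omega)
      have hdj1' := getVert_dist hconn w' hw' (j+1) (by omega)
      have hadj := w.adj_getVert_succ (by omega : j < w.length)
      have hadj' := w'.adj_getVert_succ (by omega : j < w'.length)
      have hvx : w.getVert (j+1) ≠ x := by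
        intro h
        rw [h, SimpleGraph.dist_self] at hdj1
        omega
      have htowxv : toward G x (w.getVert (j+1)) = w.getVert j :=
        toward_eq hconn hacyc hadj.symm (by omega)
      have htowyu : toward G y (w.getVert j) = w.getVert (j+1) := by
        apply toward_eq hconn hacyc hadj
        have e1 : G.dist y (w.getVert (j+1)) = G.dist (w.getVert (j+1)) y :=
          SimpleGraph.dist_comm
        have e2 : G.dist y (w.getVert j) = G.dist (w.getVert j) y := SimpleGraph.dist_comm
        rw [e1, e2, hdj.2, hdj1.2]
        omega
      have htowy'u' : toward G y' (w'.getVert j) = w'.getVert (j+1) := by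
        apply toward_eq hconn hacyc hadj'
        have e1 : G.dist y' (w'.getVert (j+1)) = G.dist (w'.getVert (j+1)) y' :=
          SimpleGraph.dist_comm
        have e2 : G.dist y' (w'.getVert j) = G.dist (w'.getVert j) y' := SimpleGraph.dist_comm
        rw [e1, e2, hdj'.2, hdj1'.2]
        omega
      -- the parent vertex
      have hcond : cond G x (w.getVert j) (gg hconn x x' y y' (w.getVert j)).1
          (gg hconn x x' y y' (w.getVert j)).2 := by
        apply gg_cond hconn hacyc hdeg
        · intro h; rw [h, gg_x]
        · intro h
          exact ((gg_main hconn hacyc hdeg x x' y y' j (w.getVert j) hdj.1).2 h).1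
      have hcond2 : cond₂ G x y y' (w.getVert j) (gg hconn x x' y y' (w.getVert j)).1
          (gg hconn x x' y y' (w.getVert j)).2 := by
        constructor
        · rw [htowyu]
          refine ⟨hadj, ?_⟩
          intro hmem
          rw [Set.mem_singleton_iff] at hmem
          by_cases hux : w.getVert j = x
          · rw [hux, toward_self] at hmem
            exact hvx hmem
          · have := (toward_spec hconn hux).2
            rw [hmem] at hdj1
            omega
        · rw [hIH, htowy'u']
          refine ⟨hadj', ?_⟩
          intro hmem
          rw [Set.mem_singleton_iff] at hmem
          by_cases hux : w.getVert j = x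
          · have hgg2 : (gg hconn x x' y y' (w.getVert j)).2 = x' := by rw [hux, gg_x]
            rw [hgg2] at hmem
            have := hdj1'.1
            rw [hmem, SimpleGraph.dist_self] at this
            omega
          · have h2 := ((gg_main hconn hacyc hdeg x x' y y' j (w.getVert j) hdj.1).2 hux).2
            have hdpar : G.dist x (toward G x (w.getVert j)) = j - 1 := by
              have := (toward_spec hconn hux).2
              omega
            have hdpar' := (gg_main hconn hacyc hdeg x x' y y' (j-1) _ hdpar).1
            rw [← h2] at hdpar'
            rw [hmem] at hdj1'
            have hj1 : 1 ≤ j := by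
              by_contra hc
              have hj0 : G.dist x (w.getVert j) = 0 := by omega
              exact hux (hconn.dist_eq_zero_iff.1 hj0).symm
            omega
      have hpoint := Fex_point hcond hcond2
      rw [gg_ne hconn x x' y y' hvx, htowxv]
      show Fex G x y y' (w.getVert j) (gg hconn x x' y y' (w.getVert j)).1
          (gg hconn x x' y y' (w.getVert j)).2 (w.getVert (j+1)) = w'.getVert (j+1)
      rw [← htowyu, hpoint, hIH, htowy'u']
  have hy : w.getVert w.length = y := SimpleGraph.Walk.getVert_length w
  have hy' : w'.getVert w'.length = y' := SimpleGraph.Walk.getVert_length w'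
  have := claim w.length (le_refl _)
  rw [hy] at this
  rw [this, ← hww', hy']

/-- homogeneity of the regular tree: pairs at equal distance are equivalent. -/
lemma homogeneity (hconn : G.Connected) (hacyc : G.IsAcyclic) {κ : ℕ}
    (hdeg : ∀ v : V, (G.neighborSet v).ncard = κ + 1) {x y x' y' : V}
    (hd : G.dist x y = G.dist x' y') :
    ∃ φ : V → V, Function.Bijective φ ∧ (∀ a b, G.dist (φ a) (φ b) = G.dist a b) ∧
      φ x = x' ∧ φ y = y' := by
  refine ⟨fun v => (gg hconn x x' y y' v).1,
    ⟨gg_injective hconn hacyc hdeg x x' y y', gg_surjective hconn hacyc hdeg x x' y y'⟩,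
    fun a b => gg_dist hconn hacyc hdeg x x' y y' a b, ?_, gg_path hconn hacyc hdeg x x' y y' hd⟩
  show (gg hconn x x' y y' x).1 = x'
  rw [gg_x]

end RadAux

/-- If the radial Toeplitz kernels `T_{α₁}` and `T_{α₂}` on a Cayley tree of
order `κ` both induce bounded operators on `ℓ²(V_κ)`, then their product is again induced by
a radial Toeplitz kernel `T_β` for some `β : ℕ → ℂ`. -/
theorem radial_toeplitz_product (κ : ℕ) (hκ : 1 ≤ κ) (V : Type) [Countable V] [DecidableEq V]
    (G : SimpleGraph V) (hconn : G.Connected) (hacyc : G.IsAcyclic)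
    (hdeg : ∀ v : V, (G.neighborSet v).ncard = κ + 1)
    (α₁ α₂ : ℕ → ℂ)
    (A₁ A₂ : lp (fun _ : V => ℂ) 2 →L[ℂ] lp (fun _ : V => ℂ) 2)
    (hA₁ : ∀ x y : V,
      (inner ℂ (lp.single 2 x (1 : ℂ)) (A₁ (lp.single 2 y (1 : ℂ))) : ℂ) = α₁ (G.dist x y))
    (hA₂ : ∀ x y : V,
      (inner ℂ (lp.single 2 x (1 : ℂ)) (A₂ (lp.single 2 y (1 : ℂ))) : ℂ) = α₂ (G.dist x y)) :
    ∃ β : ℕ → ℂ, ∀ x y : V,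
      (inner ℂ (lp.single 2 x (1 : ℂ)) ((A₁ ∘L A₂) (lp.single 2 y (1 : ℂ))) : ℂ)
        = β (G.dist x y) := by
  classical
  -- the matrix entry of the product as an absolutely convergent sum
  have key : ∀ x y : V,
      (inner ℂ (lp.single 2 x (1 : ℂ)) ((A₁ ∘L A₂) (lp.single 2 y (1 : ℂ))) : ℂ)
        = ∑' z : V, α₁ (G.dist x z) * α₂ (G.dist z y) := by
    intro x y
    have h1 : (A₁ ∘L A₂) (lp.single 2 y (1 : ℂ)) = A₁ (A₂ (lp.single 2 y (1 : ℂ))) := rfl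
    rw [h1]
    rw [← ContinuousLinearMap.adjoint_inner_left A₁]
    rw [lp.inner_eq_tsum]
    apply tsum_congr
    intro z
    have hz2 : (A₂ (lp.single 2 y (1 : ℂ)) : ∀ _ : V, ℂ) z = α₂ (G.dist z y) := by
      have h := lp.inner_single_left (𝕜 := ℂ) z (1 : ℂ) (A₂ (lp.single 2 y (1 : ℂ)))
      rw [hA₂ z y] at h
      simpa using h.symm
    have hz1 : (ContinuousLinearMap.adjoint A₁ (lp.single 2 x (1 : ℂ)) : ∀ _ : V, ℂ) z
        = (starRingEnd ℂ) (α₁ (G.dist x z)) := by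
      have h := lp.inner_single_left (𝕜 := ℂ) z (1 : ℂ)
        (ContinuousLinearMap.adjoint A₁ (lp.single 2 x (1 : ℂ)))
      have h2 : (inner ℂ (lp.single 2 z (1 : ℂ))
          (ContinuousLinearMap.adjoint A₁ (lp.single 2 x (1 : ℂ))) : ℂ)
          = (starRingEnd ℂ) (inner ℂ (ContinuousLinearMap.adjoint A₁ (lp.single 2 x (1 : ℂ)))
              (lp.single 2 z (1 : ℂ)) : ℂ) := (inner_conj_symm _ _).symm
      have h3 : (inner ℂ (ContinuousLinearMap.adjoint A₁ (lp.single 2 x (1 : ℂ)))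
          (lp.single 2 z (1 : ℂ)) : ℂ)
          = (inner ℂ (lp.single 2 x (1 : ℂ)) (A₁ (lp.single 2 z (1 : ℂ))) : ℂ) :=
        ContinuousLinearMap.adjoint_inner_left A₁ _ _
      rw [h2, h3, hA₁ x z] at h
      simpa using h.symm
    rw [RCLike.inner_apply', hz1, hz2]
    rw [starRingEnd_self_apply]
  -- the entry function
  have inv : ∀ a b a' b' : V, G.dist a b = G.dist a' b' →
      (∑' z : V, α₁ (G.dist a z) * α₂ (G.dist z b))
        = ∑' z : V, α₁ (G.dist a' z) * α₂ (G.dist z b') := by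
    intro a b a' b' hd
    obtain ⟨φ, hbij, hdist, hax, hby⟩ := RadAux.homogeneity hconn hacyc hdeg hd
    have he := Equiv.tsum_eq (Equiv.ofBijective φ hbij)
      (fun z => α₁ (G.dist a' z) * α₂ (G.dist z b'))
    rw [← he]
    apply tsum_congr
    intro z
    show α₁ (G.dist a z) * α₂ (G.dist z b) = α₁ (G.dist a' (φ z)) * α₂ (G.dist (φ z) b')
    rw [← hax, ← hby, hdist a z, hdist z b]
  refine ⟨fun n => if h : ∃ p : V × V, G.dist p.1 p.2 = n then
    (∑' z : V, α₁ (G.dist (Classical.choose h).1 z) * α₂ (G.dist z (Classical.choose h).2))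
    else 0, ?_⟩
  intro x y
  rw [key x y]
  have hex : ∃ p : V × V, G.dist p.1 p.2 = G.dist x y := ⟨(x, y), rfl⟩
  have := inv x y _ _ (Classical.choose_spec hex).symm
  simpa only [dif_pos hex] using this
end
end

section
/- Let α₁, α₂ : ℕ → ℂ be functions such that the radial Toeplitz kernels T_{α₁} and T_{α₂} both induce bounded operators on ℓ²(V_κ). Then these operators commute: T_{α₁} T_{α₂} = T_{α₂} T_{α₁}. -/
open MeasureTheory

noncomputable section

set_option linter.unusedSectionVars false
set_option linter.unusedVariables false
set_option maxHeartbeats 1000000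


open SimpleGraph Finset Walk

variable {V : Type} [DecidableEq V] {G : SimpleGraph V}

section TreeBasic

variable (hconn : G.Connected) (hacyc : G.IsAcyclic)

omit [DecidableEq V] in
lemma isPath_concat' {u v w : V} (p : G.Walk u v) (hp : p.IsPath) (h : G.Adj v w)
    (hw : w ∉ p.support) : (p.concat h).IsPath := by
  rw [Walk.isPath_def, Walk.support_concat, List.nodup_append]
  exact ⟨hp.support_nodup, List.nodup_singleton _,
    fun a ha b hb hab => hw (by simp at hb; rw [← hb, ← hab]; exact ha)⟩

include hconn hacyc

/-- In a tree, every path realizes the distance. -/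
lemma tree_path_length {u v : V} (p : G.Walk u v) (hp : p.IsPath) :
    p.length = G.dist u v := by
  obtain ⟨q, hq, hql⟩ := hconn.exists_path_of_dist u v
  have := hacyc.path_unique ⟨p, hp⟩ ⟨q, hq⟩
  have hpq : p = q := Subtype.ext_iff.1 this
  rw [hpq]; exact hql

/-- L2: points on a path are metrically between the endpoints -/
lemma dist_add_of_mem {u v c : V} (p : G.Walk u v) (hp : p.IsPath) (hc : c ∈ p.support) :
    G.dist u c + G.dist c v = G.dist u v := by
  have h1 := tree_path_length hconn hacyc (p.takeUntil c hc) (hp.takeUntil hc)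
  have h2 := tree_path_length hconn hacyc (p.dropUntil c hc) (hp.dropUntil hc)
  have h3 := tree_path_length hconn hacyc p hp
  have := congrArg Walk.length (p.take_spec hc)
  rw [Walk.length_append] at this
  omega

/-- L3: metrically between implies on the path -/
lemma mem_of_between {u v c : V} (p : G.Walk u v) (hp : p.IsPath)
    (h : G.dist u c + G.dist c v = G.dist u v) : c ∈ p.support := by
  obtain ⟨q1, hq1, hl1⟩ := hconn.exists_path_of_dist u c
  obtain ⟨q2, hq2, hl2⟩ := hconn.exists_path_of_dist c v
  -- q1.append q2 is a path
  have hdisj : ∀ w, w ∈ q1.support → w ∈ q2.support → w = c := by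
    intro w hw1 hw2
    have e1 := dist_add_of_mem hconn hacyc q1 hq1 hw1
    have e2 := dist_add_of_mem hconn hacyc q2 hq2 hw2
    have t := hconn.dist_triangle (u := u) (v := w) (w := v)
    have hcw : G.dist c w = G.dist w c := G.dist_comm ..
    have : G.dist c w = 0 := by omega
    exact ((hconn.dist_eq_zero_iff).1 this).symm
  have happ : (q1.append q2).IsPath := by
    rw [Walk.isPath_def, Walk.support_append, List.nodup_append]
    refine ⟨hq1.support_nodup, ?_, ?_⟩
    · exact (hq2.support_nodup).tail
    · intro w hw1 w' hw2 hww
      subst hww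
      have hw2' : w ∈ q2.support := List.mem_of_mem_tail hw2
      have : w = c := hdisj w hw1 hw2'
      subst this
      -- c is head of q2.support, and c in tail means duplicate
      have := hq2.support_nodup
      rw [q2.support_eq_cons] at this
      exact (List.nodup_cons.1 this).1 hw2
  have := hacyc.path_unique ⟨p, hp⟩ ⟨q1.append q2, happ⟩
  have hpq : p = q1.append q2 := Subtype.ext_iff.1 this
  rw [hpq, Walk.mem_support_append_iff]
  left; exact q1.end_mem_support

/-- L4: adjacent vertices have distances to any p differing by exactly one -/
lemma adj_dist_cases (p : V) {z q : V} (h : G.Adj z q) :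
    G.dist p q = G.dist p z + 1 ∨ G.dist p z = G.dist p q + 1 := by
  have h1 : G.dist p q ≤ G.dist p z + 1 := by
    calc G.dist p q ≤ G.dist p z + G.dist z q := hconn.dist_triangle
    _ ≤ G.dist p z + 1 := by
        have hd : G.dist z q = 1 := (dist_eq_one_iff_adj (G:=G)).2 h
        omega
  have h2 : G.dist p z ≤ G.dist p q + 1 := by
    calc G.dist p z ≤ G.dist p q + G.dist q z := hconn.dist_triangle
    _ ≤ G.dist p q + 1 := by
        have hd : G.dist q z = 1 := (dist_eq_one_iff_adj (G:=G)).2 h.symm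
        omega
  have hne : G.dist p z ≠ G.dist p q := by
    intro heq
    obtain ⟨w, hw, hwl⟩ := hconn.exists_path_of_dist p z
    by_cases hq : q ∈ w.support
    · have := dist_add_of_mem hconn hacyc w hw hq
      have hqz : G.dist q z ≠ 0 := by
        intro h0
        have hqz' := (hconn.dist_eq_zero_iff).1 h0
        subst hqz'
        exact G.loopless.irrefl _ h
      omega
    · have hcp : (w.concat h).IsPath := isPath_concat' w hw h hq
      have := tree_path_length hconn hacyc _ hcp
      rw [Walk.length_concat] at this
      omega
  omega

/-- L5: parent towards p exists -/
lemma exists_parent {p z : V} (h : G.dist p z ≠ 0) :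
    ∃ q, G.Adj z q ∧ G.dist p q + 1 = G.dist p z := by
  obtain ⟨w, hw, hwl⟩ := hconn.exists_path_of_dist p z
  have hpz : p ≠ z := fun hh => h (by rw [hh]; simp)
  obtain ⟨q, hadj, w', hw'⟩ := Walk.exists_eq_cons_of_ne (Ne.symm hpz) w.reverse
  refine ⟨q, hadj, ?_⟩
  have hl : w'.length + 1 = G.dist p z := by
    have := congrArg Walk.length hw'
    rw [Walk.length_reverse] at this
    simp [Walk.length_cons] at this
    omega
  -- w' : q → p so dist p q ≤ w'.length
  have h1 : G.dist p q ≤ w'.length := by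
    have := dist_le w'.reverse
    rwa [Walk.length_reverse] at this
  have h2 : G.dist p z ≤ G.dist p q + 1 := by
    calc G.dist p z ≤ G.dist p q + G.dist q z := hconn.dist_triangle
    _ ≤ G.dist p q + 1 := by
        have hd : G.dist q z = 1 := (dist_eq_one_iff_adj (G:=G)).2 hadj.symm
        omega
  omega

/-- L6: parent towards p is unique -/
lemma parent_unique {p z q₁ q₂ : V} (h₁ : G.Adj z q₁) (h₂ : G.Adj z q₂)
    (hd₁ : G.dist p q₁ + 1 = G.dist p z) (hd₂ : G.dist p q₂ + 1 = G.dist p z) : q₁ = q₂ := by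
  by_contra hne
  obtain ⟨w, hw, hwl⟩ := hconn.exists_path_of_dist p q₁
  have hz : z ∉ w.support := by
    intro hz
    have := dist_add_of_mem hconn hacyc w hw hz
    have hzq : G.dist z q₁ = 1 := (dist_eq_one_iff_adj (G:=G)).2 h₁
    omega
  have hcp : (w.concat h₁.symm).IsPath := isPath_concat' w hw h₁.symm hz
  -- path p → z via q₁, of length dist p z; q₂ not in it
  have hq₂ : q₂ ∉ (w.concat h₁.symm).support := by
    rw [Walk.support_concat]
    intro hmem
    rcases List.mem_append.1 hmem with hmem | hmem
    · have := dist_add_of_mem hconn hacyc w hw hmem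
      have h0 : G.dist q₂ q₁ = 0 := by omega
      exact hne (hconn.dist_eq_zero_iff.1 h0).symm
    · simp at hmem
      exact G.loopless.irrefl z (by rwa [hmem] at h₂)
  have hcp2 : ((w.concat h₁.symm).concat h₂).IsPath := isPath_concat' _ hcp h₂ hq₂
  have := tree_path_length hconn hacyc _ hcp2
  rw [Walk.length_concat, Walk.length_concat] at this
  omega

/-- L8: two vertices on a path are ordered -/
lemma order_on_path {u v c z : V} (p : G.Walk u v) (hp : p.IsPath)
    (hc : c ∈ p.support) (hz : z ∈ p.support) :
    G.dist u c + G.dist c z = G.dist u z ∨ G.dist u z + G.dist z c = G.dist u c := by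
  have hcsplit := p.take_spec hc
  by_cases hz1 : z ∈ (p.takeUntil c hc).support
  · right
    exact dist_add_of_mem hconn hacyc _ (hp.takeUntil hc) hz1
  · left
    have hz2 : z ∈ (p.dropUntil c hc).support := by
      have hiff := Walk.mem_support_append_iff (t := z) (p.takeUntil c hc) (p.dropUntil c hc)
      rw [hcsplit] at hiff
      rcases hiff.1 hz with h | h
      · exact absurd h hz1
      · exact h
    have e1 := dist_add_of_mem hconn hacyc _ (hp.dropUntil hc) hz2
    have e2 := dist_add_of_mem hconn hacyc p hp hc
    have e3 := dist_add_of_mem hconn hacyc p hp hz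
    have t1 := hconn.dist_triangle (u := u) (v := c) (w := z)
    have t2 : G.dist z v ≤ G.dist z c + G.dist c v := by
      have := hconn.dist_triangle (u := z) (v := c) (w := v)
      omega
    have hcz : G.dist c z = G.dist z c := dist_comm (G:=G)
    omega

/-- L7: median of three points -/
lemma median (x y z : V) :
    ∃ c, G.dist x c + G.dist c z = G.dist x z ∧ G.dist y c + G.dist c z = G.dist y z ∧
      G.dist x c + G.dist c y = G.dist x y := by
  obtain ⟨P, hP, hPl⟩ := hconn.exists_path_of_dist x y
  -- strong induction on dist x z
  suffices H : ∀ n z, G.dist x z = n → ∃ c, c ∈ P.support ∧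
      G.dist x c + G.dist c z = G.dist x z ∧ G.dist y c + G.dist c z = G.dist y z by
    obtain ⟨c, hc, h1, h2⟩ := H (G.dist x z) z rfl
    exact ⟨c, h1, h2, dist_add_of_mem hconn hacyc P hP hc⟩
  intro n
  induction n using Nat.strong_induction_on with
  | _ n ih =>
    intro z hn
    by_cases hzP : z ∈ P.support
    · refine ⟨z, hzP, ?_, ?_⟩ <;> simp [SimpleGraph.dist_self]
    · have hzx : G.dist x z ≠ 0 := by
        intro h0
        exact hzP ((hconn.dist_eq_zero_iff.1 h0) ▸ P.start_mem_support)
      obtain ⟨z', hadj, hz'⟩ := exists_parent hconn hacyc (p := x) hzx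
      obtain ⟨c, hcP, hc1, hc2⟩ := ih (G.dist x z') (by omega) z' rfl
      have hdz : G.dist z' z = 1 := (dist_eq_one_iff_adj (G:=G)).2 hadj.symm
      have hzz' : G.dist z z' = 1 := (dist_eq_one_iff_adj (G:=G)).2 hadj
      have hcz_le : G.dist c z ≤ G.dist c z' + 1 := by
        have := hconn.dist_triangle (u := c) (v := z') (w := z)
        omega
      have hxz_le : G.dist x z ≤ G.dist x c + G.dist c z := hconn.dist_triangle
      have hxc_le : G.dist x c ≤ G.dist x z + G.dist z c := by
        have := hconn.dist_triangle (u := x) (v := z) (w := c)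
        omega
      have hcomm : G.dist z c = G.dist c z := dist_comm (G:=G)
      have hfa : G.dist x c + G.dist c z = G.dist x z := by omega
      have hfb : G.dist c z = G.dist c z' + 1 := by omega
      refine ⟨c, hcP, hfa, ?_⟩
      have hyz_le : G.dist y z ≤ G.dist y c + G.dist c z := hconn.dist_triangle
      rcases adj_dist_cases hconn hacyc y hadj with hy | hy
      · -- bad case : G.dist y z' = G.dist y z + 1
        exfalso
        obtain ⟨Q, hQ, hQl⟩ := hconn.exists_path_of_dist y z'
        have hzQ : z ∈ Q.support := by
          refine mem_of_between hconn hacyc Q hQ ?_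
          omega
        have hcQ : c ∈ Q.support := mem_of_between hconn hacyc Q hQ hc2
        rcases order_on_path hconn hacyc Q hQ hcQ hzQ with ho | ho
        · omega
        · -- d y z + d z c = d y c ; derive c = z'
          have hcz'0 : G.dist c z' = 0 := by omega
          have hcz' : c = z' := hconn.dist_eq_zero_iff.1 hcz'0
          have hPxy := dist_add_of_mem hconn hacyc P hP hcP
          have : z ∈ P.support := by
            refine mem_of_between hconn hacyc P hP ?_
            have hzy : G.dist z y = G.dist y z := dist_comm (G:=G)
            have hyc : G.dist y c = G.dist c y := dist_comm (G:=G)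
            omega
          exact hzP this
      · -- good case : G.dist y z = G.dist y z' + 1
        omega

/-- L10: points along a geodesic exist at every intermediate distance -/
lemma exists_on_geodesic (x y : V) : ∀ j, j ≤ G.dist x y →
    ∃ c, G.dist x c = j ∧ G.dist x c + G.dist c y = G.dist x y := by
  intro j
  induction j with
  | zero =>
    intro _
    exact ⟨x, by simp, by simp⟩
  | succ j ih =>
    intro hj
    obtain ⟨c, hc1, hc2⟩ := ih (by omega)
    have hcy : G.dist y c ≠ 0 := by
      have hcom : G.dist y c = G.dist c y := dist_comm (G:=G)
      omega
    obtain ⟨q, hadj, hq⟩ := exists_parent hconn hacyc (p := y) hcy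
    have hcq : G.dist c q = 1 := (dist_eq_one_iff_adj (G:=G)).2 hadj
    have h1 : G.dist x q ≤ j + 1 := by
      have := hconn.dist_triangle (u := x) (v := c) (w := q)
      omega
    have h2 : G.dist x y ≤ G.dist x q + G.dist q y := hconn.dist_triangle
    have hcom1 : G.dist y c = G.dist c y := dist_comm (G:=G)
    have hcom2 : G.dist y q = G.dist q y := dist_comm (G:=G)
    exact ⟨q, by omega, by omega⟩

end TreeBasic

section Counting

variable {κ : ℕ}

/-- neighbor sets are finite -/
lemma nbr_finite (hdeg : ∀ v : V, (G.neighborSet v).ncard = κ + 1) (v : V) :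
    (G.neighborSet v).Finite := by
  by_contra hinf
  have hinf' : (G.neighborSet v).Infinite := hinf
  have := hinf'.ncard
  rw [hdeg v] at this
  omega

/-- the set of children of `q` (seen from root `c`) -/
def childSet (G : SimpleGraph V) (c q : V) : Set V :=
  {z | G.Adj q z ∧ G.dist c z = G.dist c q + 1}

lemma childSet_finite (hdeg : ∀ v : V, (G.neighborSet v).ncard = κ + 1) (c q : V) :
    (childSet G c q).Finite :=
  (nbr_finite hdeg q).subset (fun z hz => hz.1)

lemma childSet_ncard (hconn : G.Connected) (hacyc : G.IsAcyclic)
    (hdeg : ∀ v : V, (G.neighborSet v).ncard = κ + 1) {c q : V} (h : G.dist c q ≠ 0) :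
    (childSet G c q).ncard = κ := by
  obtain ⟨par, hpadj, hpar⟩ := exists_parent hconn hacyc (p := c) h
  have hset : childSet G c q = G.neighborSet q \ {par} := by
    ext z
    constructor
    · rintro ⟨hadj, hdz⟩
      refine ⟨hadj, ?_⟩
      simp only [Set.mem_singleton_iff]
      intro hzp
      rw [hzp] at hdz
      omega
    · rintro ⟨hadj, hzp⟩
      simp only [Set.mem_singleton_iff] at hzp
      refine ⟨hadj, ?_⟩
      rcases adj_dist_cases hconn hacyc c hadj with hh | hh
      · exact hh
      · exact absurd (parent_unique hconn hacyc hadj hpadj (by omega) hpar) hzp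
  rw [hset]
  have hmem : par ∈ G.neighborSet q := hpadj
  rw [Set.ncard_diff_singleton_of_mem hmem, hdeg q]
  omega

/-- sphere of radius h around c avoiding directions D -/
def sphD (G : SimpleGraph V) (c : V) (D : Set V) (h : ℕ) : Set V :=
  {z | G.dist c z = h ∧ ∀ w ∈ D, G.dist w z = h + 1}

lemma sphD_zero (hconn : G.Connected) (c : V) {D : Set V} (hD : D ⊆ G.neighborSet c) :
    sphD G c D 0 = {c} := by
  ext z
  simp only [sphD, Set.mem_setOf_eq, Set.mem_singleton_iff]
  constructor
  · rintro ⟨h0, _⟩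
    exact (hconn.dist_eq_zero_iff.1 h0).symm
  · rintro rfl
    refine ⟨by simp, fun w hw => ?_⟩
    exact (dist_eq_one_iff_adj (G:=G)).2 (hD hw).symm

lemma sphD_one (hconn : G.Connected) (hacyc : G.IsAcyclic) (c : V) {D : Set V}
    (hD : D ⊆ G.neighborSet c) : sphD G c D 1 = G.neighborSet c \ D := by
  ext z
  simp only [sphD, Set.mem_setOf_eq, Set.mem_diff, SimpleGraph.mem_neighborSet]
  constructor
  · rintro ⟨h1, hAll⟩
    refine ⟨(dist_eq_one_iff_adj (G:=G)).1 h1, fun hzD => ?_⟩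
    have := hAll z hzD
    rw [SimpleGraph.dist_self] at this
    omega
  · rintro ⟨hadj, hzD⟩
    refine ⟨(dist_eq_one_iff_adj (G:=G)).2 hadj, fun w hw => ?_⟩
    have hwadj : G.Adj c w := hD hw
    have hwz : w ≠ z := fun hh => hzD (hh ▸ hw)
    have h2 : G.dist w z ≤ 2 := by
      have t := hconn.dist_triangle (u := w) (v := c) (w := z)
      have e1 : G.dist w c = 1 := (dist_eq_one_iff_adj (G:=G)).2 hwadj.symm
      have e2 : G.dist c z = 1 := (dist_eq_one_iff_adj (G:=G)).2 hadj
      omega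
    have h0 : G.dist w z ≠ 0 := fun hh => hwz (hconn.dist_eq_zero_iff.1 hh)
    have h1 : G.dist w z ≠ 1 := by
      intro hh
      have hadjwz : G.Adj w z := (dist_eq_one_iff_adj (G:=G)).1 hh
      have e1 : G.dist c w = 1 := (dist_eq_one_iff_adj (G:=G)).2 hwadj
      have e2 : G.dist c z = 1 := (dist_eq_one_iff_adj (G:=G)).2 hadj
      rcases adj_dist_cases hconn hacyc c hadjwz with hh' | hh' <;> omega
    omega

lemma sphD_succ (hconn : G.Connected) (hacyc : G.IsAcyclic) (c : V) {D : Set V}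
    (hD : D ⊆ G.neighborSet c) {n : ℕ} (hn : 1 ≤ n) :
    sphD G c D (n + 1) = ⋃ q ∈ sphD G c D n, childSet G c q := by
  ext z
  simp only [Set.mem_iUnion, exists_prop]
  constructor
  · rintro ⟨hdz, hAll⟩
    have hz0 : G.dist c z ≠ 0 := by omega
    obtain ⟨q, hadj, hq⟩ := exists_parent hconn hacyc (p := c) hz0
    have hdq : G.dist c q = n := by omega
    have hstep : ∀ w ∈ D, G.dist w q = n + 1 := by
      intro w hw
      have hwc : G.dist w c = 1 := (dist_eq_one_iff_adj (G:=G)).2 (hD hw).symm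
      have t1 : G.dist w q ≤ G.dist w c + G.dist c q := hconn.dist_triangle
      have t2 : G.dist w z ≤ G.dist w q + G.dist q z := hconn.dist_triangle
      have hqz : G.dist q z = 1 := (dist_eq_one_iff_adj (G:=G)).2 hadj.symm
      have := hAll w hw
      omega
    exact ⟨q, ⟨hdq, hstep⟩, hadj.symm, by omega⟩
  · rintro ⟨q, ⟨hdq, hqAll⟩, hadj, hdz⟩
    refine ⟨by omega, ?_⟩
    intro w hw
    have hwq := hqAll w hw
    have hqz : G.dist q z = 1 := (dist_eq_one_iff_adj (G:=G)).2 hadj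
    rcases adj_dist_cases hconn hacyc w hadj with hh | hh
    · omega
    · -- bad case : G.dist w q = G.dist w z + 1, i.e. d w z = n
      exfalso
      have hwz : G.dist w z = n := by omega
      have hcw : G.Adj c w := hD hw
      obtain ⟨R0, hR0, hR0l⟩ := hconn.exists_path_of_dist w z
      have hcR0 : c ∉ R0.support := by
        intro hc
        have := dist_add_of_mem hconn hacyc R0 hR0 hc
        have e1 : G.dist w c = 1 := (dist_eq_one_iff_adj (G:=G)).2 hcw.symm
        omega
      have hR : (Walk.cons hcw R0).IsPath := by
        rw [Walk.cons_isPath_iff]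
        exact ⟨hR0, hcR0⟩
      have hqR : q ∈ (Walk.cons hcw R0).support := by
        refine mem_of_between hconn hacyc _ hR ?_
        have hqzc : G.dist q z = 1 := hqz
        omega
      rw [Walk.support_cons] at hqR
      rcases List.mem_cons.1 hqR with hh' | hh'
      · rw [hh'] at hdq
        rw [SimpleGraph.dist_self] at hdq
        omega
      · have := dist_add_of_mem hconn hacyc R0 hR0 hh'
        omega

lemma sphD_disjoint (hconn : G.Connected) (hacyc : G.IsAcyclic) (c : V) {q q' : V}
    (hne : q ≠ q') {z : V} (hz : z ∈ childSet G c q) (hz' : z ∈ childSet G c q')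
    (hdq : G.dist c q = G.dist c q') : False := by
  obtain ⟨hadj, hdz⟩ := hz
  obtain ⟨hadj', hdz'⟩ := hz'
  exact hne (parent_unique (p := c) hconn hacyc hadj.symm hadj'.symm (by omega) (by omega))

lemma sphD_count (hκ : 1 ≤ κ) (hconn : G.Connected) (hacyc : G.IsAcyclic)
    (hdeg : ∀ v : V, (G.neighborSet v).ncard = κ + 1)
    (c : V) {D : Set V} (hD : D ⊆ G.neighborSet c) :
    ∀ h : ℕ, (sphD G c D h).Finite ∧
      (sphD G c D h).ncard = if h = 0 then 1 else (κ + 1 - D.ncard) * κ ^ (h - 1) := by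
  intro h
  induction h with
  | zero =>
    rw [sphD_zero hconn c hD]
    simp
  | succ n ih =>
    match n, ih with
    | 0, _ =>
      rw [sphD_one hconn hacyc c hD]
      refine ⟨(nbr_finite hdeg c).diff, ?_⟩
      rw [Set.ncard_diff hD ((nbr_finite hdeg c).subset hD), hdeg c]
      simp
    | (m+1), ih =>
      set n := m + 1 with hndef
      have hn : 1 ≤ n := by omega
      obtain ⟨hSnfin, hSncard⟩ := ih
      have hch : ∀ q, (childSet G c q).Finite := childSet_finite hdeg c
      classical
      set F : Finset V := hSnfin.toFinset with hF
      set chF : V → Finset V := fun q => (hch q).toFinset with hchF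
      have hset : sphD G c D (n + 1) = ↑(F.biUnion chF) := by
        rw [sphD_succ hconn hacyc c hD hn]
        ext z
        simp only [Set.mem_iUnion, exists_prop, Finset.coe_biUnion, Set.mem_iUnion,
          Finset.mem_coe, Finset.mem_biUnion]
        constructor
        · rintro ⟨q, hq, hzq⟩
          exact ⟨q, by rwa [hF, Set.Finite.mem_toFinset], by rwa [hchF, Set.Finite.mem_toFinset]⟩
        · rintro ⟨q, hq, hzq⟩
          rw [hF, Set.Finite.mem_toFinset] at hq
          rw [hchF, Set.Finite.mem_toFinset] at hzq
          exact ⟨q, hq, hzq⟩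
      refine ⟨by rw [hset]; exact (F.biUnion chF).finite_toSet, ?_⟩
      rw [hset]
      rw [Set.ncard_coe_finset]
      rw [Finset.card_biUnion]
      · have hcards : ∀ q ∈ F, (chF q).card = κ := by
          intro q hq
          rw [hF, Set.Finite.mem_toFinset] at hq
          have hq0 : G.dist c q ≠ 0 := by
            have := hq.1
            omega
          rw [hchF]
          rw [← Set.ncard_eq_toFinset_card _ (hch q)]
          exact childSet_ncard hconn hacyc hdeg hq0
        rw [Finset.sum_congr rfl hcards, Finset.sum_const, smul_eq_mul]
        have hFcard : F.card = (κ + 1 - D.ncard) * κ ^ (n - 1) := by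
          rw [hF, ← Set.ncard_eq_toFinset_card _ hSnfin, hSncard]
          simp [hndef]
        rw [hFcard]
        have h1 : n - 1 + 1 = n := by omega
        have : (κ + 1 - D.ncard) * κ ^ (n - 1) * κ = (κ + 1 - D.ncard) * κ ^ n := by
          rw [mul_assoc, ← pow_succ, h1]
        rw [this]
        simp
      · intro q hq q' hq' hne
        rw [Function.onFun, Finset.disjoint_left]
        intro z hz hz'
        rw [hchF, Set.Finite.mem_toFinset] at hz hz'
        rw [Finset.mem_coe, hF, Set.Finite.mem_toFinset] at hq hq'
        exact sphD_disjoint hconn hacyc c hne hz hz' (by rw [hq.1, hq'.1])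

/-- fiber of the distance-pair map -/
def Fib (G : SimpleGraph V) (x y : V) (a b : ℕ) : Set V :=
  {z | G.dist x z = a ∧ G.dist y z = b}

/-- neighbors of c strictly closer to x or to y -/
def Dset (G : SimpleGraph V) (x y c : V) : Set V :=
  {w | G.Adj c w ∧ (G.dist x w + 1 = G.dist x c ∨ G.dist y w + 1 = G.dist y c)}

lemma Dset_subset (x y c : V) : Dset G x y c ⊆ G.neighborSet c := fun _ hw => hw.1

lemma Dset_swap (x y c : V) : Dset G x y c = Dset G y x c := by
  ext w
  simp only [Dset, Set.mem_setOf_eq]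
  tauto

/-- helper: a vertex in the sphere avoiding D has the expected distance to x -/
lemma sphD_dist_x (hconn : G.Connected) (hacyc : G.IsAcyclic) {x y c : V} {h : ℕ} {z : V}
    (hdz : G.dist c z = h) (hall : ∀ w ∈ Dset G x y c, G.dist w z = h + 1) :
    G.dist x z = G.dist x c + h := by
  obtain ⟨c₂, m1, m2, m3⟩ := median hconn hacyc x c z
  by_cases hc2 : c₂ = c
  · rw [hc2] at m1
    omega
  · exfalso
    have hcc2 : G.dist c₂ c ≠ 0 := by
      intro h0
      exact hc2 (hconn.dist_eq_zero_iff.1 h0)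
    obtain ⟨w, hwadj, hwd⟩ := exists_parent hconn hacyc (p := c₂) hcc2
    have hcomm1 : G.dist c c₂ = G.dist c₂ c := dist_comm (G:=G)
    have hcomm2 : G.dist w c₂ = G.dist c₂ w := dist_comm (G:=G)
    have hxw : G.dist x w + 1 = G.dist x c := by
      have t1 : G.dist x w ≤ G.dist x c₂ + G.dist c₂ w := hconn.dist_triangle
      have t2 : G.dist x c ≤ G.dist x w + G.dist w c := by
        have := hconn.dist_triangle (u := x) (v := w) (w := c)
        omega
      have hwc : G.dist w c = 1 := (dist_eq_one_iff_adj (G:=G)).2 hwadj.symm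
      omega
    have hwD : w ∈ Dset G x y c := ⟨hwadj, Or.inl hxw⟩
    have := hall w hwD
    have t3 : G.dist w z ≤ G.dist w c₂ + G.dist c₂ z := hconn.dist_triangle
    omega

/-- L11 : fibers are spheres -/
lemma fib_eq_sphD (hconn : G.Connected) (hacyc : G.IsAcyclic) {x y c : V} {a b h : ℕ}
    (hc : G.dist x c + G.dist c y = G.dist x y)
    (ha : a = G.dist x c + h) (hb : b = G.dist y c + h) :
    Fib G x y a b = sphD G c (Dset G x y c) h := by
  have hcomm0 : G.dist c y = G.dist y c := dist_comm (G:=G)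
  ext z
  constructor
  · rintro ⟨hxz, hyz⟩
    obtain ⟨c₁, m1, m2, m3⟩ := median hconn hacyc x y z
    -- c₁ = c
    obtain ⟨P, hP, hPl⟩ := hconn.exists_path_of_dist x y
    have hcP : c ∈ P.support := mem_of_between hconn hacyc P hP hc
    have hc1P : c₁ ∈ P.support := mem_of_between hconn hacyc P hP m3
    have hcomm1 : G.dist c₁ y = G.dist y c₁ := dist_comm (G:=G)
    have hxc1 : G.dist x c₁ = G.dist x c := by omega
    have hceq : c₁ = c := by
      rcases order_on_path hconn hacyc P hP hcP hc1P with ho | ho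
      · have h0 : G.dist c c₁ = 0 := by omega
        exact ((hconn.dist_eq_zero_iff).1 h0).symm
      · have hcomm2 : G.dist c₁ c = G.dist c c₁ := dist_comm (G:=G)
        have h0 : G.dist c c₁ = 0 := by omega
        exact ((hconn.dist_eq_zero_iff).1 h0).symm
    rw [hceq] at m1 m2
    have hdz : G.dist c z = h := by omega
    refine ⟨hdz, ?_⟩
    rintro w ⟨hwadj, hwor⟩
    have hwc : G.dist w c = 1 := (dist_eq_one_iff_adj (G:=G)).2 hwadj.symm
    rcases adj_dist_cases hconn hacyc z hwadj with hh | hh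
    · -- G.dist z w = G.dist z c + 1
      have hcomm3 : G.dist z w = G.dist w z := dist_comm (G:=G)
      have hcomm4 : G.dist z c = G.dist c z := dist_comm (G:=G)
      omega
    · -- bad : G.dist z c = G.dist z w + 1 , so d w z = h - 1
      exfalso
      have hcomm3 : G.dist z w = G.dist w z := dist_comm (G:=G)
      have hcomm4 : G.dist z c = G.dist c z := dist_comm (G:=G)
      rcases hwor with hw1 | hw1
      · have t : G.dist x z ≤ G.dist x w + G.dist w z := hconn.dist_triangle
        omega
      · have t : G.dist y z ≤ G.dist y w + G.dist w z := hconn.dist_triangle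
        omega
  · rintro ⟨hdz, hall⟩
    have hx := sphD_dist_x hconn hacyc (y := y) hdz hall
    have hy := sphD_dist_x hconn hacyc (y := x) hdz (by rw [← Dset_swap]; exact hall)
    exact ⟨by omega, by omega⟩

/-- L13 : size of the direction set -/
lemma Dset_ncard (hconn : G.Connected) (hacyc : G.IsAcyclic) {x y c : V}
    (hc : G.dist x c + G.dist c y = G.dist x y) :
    (Dset G x y c).ncard =
      (if G.dist x c = 0 then 0 else 1) + (if G.dist y c = 0 then 0 else 1) := by
  have hcomm0 : G.dist c y = G.dist y c := dist_comm (G:=G)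
  by_cases hx : G.dist x c = 0 <;> by_cases hy : G.dist y c = 0
  · have : Dset G x y c = ∅ := by
      ext w
      simp only [Dset, Set.mem_setOf_eq, Set.mem_empty_iff_false, iff_false]
      rintro ⟨_, hor⟩
      omega
    rw [this]
    simp [hx, hy]
  · have hyc : G.dist y c ≠ 0 := hy
    obtain ⟨w₂, hw₂adj, hw₂⟩ := exists_parent hconn hacyc (p := y) hyc
    have : Dset G x y c = {w₂} := by
      ext w
      simp only [Dset, Set.mem_setOf_eq, Set.mem_singleton_iff]
      constructor
      · rintro ⟨hadj, hor⟩
        rcases hor with hh | hh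
        · omega
        · exact parent_unique (p := y) hconn hacyc hadj hw₂adj hh hw₂
      · rintro rfl
        exact ⟨hw₂adj, Or.inr hw₂⟩
    rw [this]
    simp [hx, hy]
  · have hxc : G.dist x c ≠ 0 := hx
    obtain ⟨w₁, hw₁adj, hw₁⟩ := exists_parent hconn hacyc (p := x) hxc
    have : Dset G x y c = {w₁} := by
      ext w
      simp only [Dset, Set.mem_setOf_eq, Set.mem_singleton_iff]
      constructor
      · rintro ⟨hadj, hor⟩
        rcases hor with hh | hh
        · exact parent_unique (p := x) hconn hacyc hadj hw₁adj hh hw₁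
        · omega
      · rintro rfl
        exact ⟨hw₁adj, Or.inl hw₁⟩
    rw [this]
    simp [hx, hy]
  · have hxc : G.dist x c ≠ 0 := hx
    have hyc : G.dist y c ≠ 0 := hy
    obtain ⟨w₁, hw₁adj, hw₁⟩ := exists_parent hconn hacyc (p := x) hxc
    obtain ⟨w₂, hw₂adj, hw₂⟩ := exists_parent hconn hacyc (p := y) hyc
    have hne : w₁ ≠ w₂ := by
      intro hh
      subst hh
      have t : G.dist x y ≤ G.dist x w₁ + G.dist w₁ y := hconn.dist_triangle
      have hcm : G.dist w₁ y = G.dist y w₁ := dist_comm (G:=G)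
      omega
    have : Dset G x y c = {w₁, w₂} := by
      ext w
      simp only [Dset, Set.mem_setOf_eq, Set.mem_insert_iff, Set.mem_singleton_iff]
      constructor
      · rintro ⟨hadj, hor⟩
        rcases hor with hh | hh
        · exact Or.inl (parent_unique (p := x) hconn hacyc hadj hw₁adj hh hw₁)
        · exact Or.inr (parent_unique (p := y) hconn hacyc hadj hw₂adj hh hw₂)
      · rintro (rfl | rfl)
        · exact ⟨hw₁adj, Or.inl hw₁⟩
        · exact ⟨hw₂adj, Or.inr hw₂⟩
    rw [this, Set.ncard_pair hne]
    simp [hx, hy]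

lemma fib_data (hconn : G.Connected) (hacyc : G.IsAcyclic) {x y : V} {a b : ℕ}
    (hne : (Fib G x y a b).Nonempty) :
    ∃ c h, (G.dist x c + G.dist c y = G.dist x y) ∧ a = G.dist x c + h ∧ b = G.dist y c + h := by
  obtain ⟨z, hz1, hz2⟩ := hne
  obtain ⟨c, m1, m2, m3⟩ := median hconn hacyc x y z
  have hcomm : G.dist c y = G.dist y c := dist_comm (G:=G)
  exact ⟨c, G.dist c z, by omega, by omega, by omega⟩

lemma fib_finite (hκ : 1 ≤ κ) (hconn : G.Connected) (hacyc : G.IsAcyclic)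
    (hdeg : ∀ v : V, (G.neighborSet v).ncard = κ + 1) (x y : V) (a b : ℕ) :
    (Fib G x y a b).Finite := by
  by_cases hne : (Fib G x y a b).Nonempty
  · obtain ⟨c, h, hc, ha, hb⟩ := fib_data hconn hacyc hne
    rw [fib_eq_sphD hconn hacyc hc ha hb]
    exact (sphD_count hκ hconn hacyc hdeg c (Dset_subset x y c) h).1
  · rw [Set.not_nonempty_iff_eq_empty] at hne
    rw [hne]
    exact Set.finite_empty

lemma fib_card_aux (hκ : 1 ≤ κ) (hconn : G.Connected) (hacyc : G.IsAcyclic)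
    (hdeg : ∀ v : V, (G.neighborSet v).ncard = κ + 1) (x y : V) (a b : ℕ)
    (hne : (Fib G x y a b).Nonempty) :
    (Fib G x y a b).ncard = (Fib G x y b a).ncard := by
  obtain ⟨c, h, hc, ha, hb⟩ := fib_data hconn hacyc hne
  have hcomm : G.dist c y = G.dist y c := dist_comm (G:=G)
  obtain ⟨c', hc'1, hc'2⟩ := exists_on_geodesic hconn hacyc x y (G.dist c y) (by omega)
  have hcomm' : G.dist c' y = G.dist y c' := dist_comm (G:=G)
  have hb' : b = G.dist x c' + h := by omega
  have ha' : a = G.dist y c' + h := by omega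
  rw [fib_eq_sphD hconn hacyc hc ha hb, fib_eq_sphD hconn hacyc hc'2 hb' ha']
  rw [(sphD_count hκ hconn hacyc hdeg c (Dset_subset x y c) h).2,
    (sphD_count hκ hconn hacyc hdeg c' (Dset_subset x y c') h).2]
  rw [Dset_ncard hconn hacyc hc, Dset_ncard hconn hacyc hc'2]
  have e1 : G.dist x c' = G.dist y c := by omega
  have e2 : G.dist y c' = G.dist x c := by omega
  rw [e1, e2, add_comm (if G.dist y c = 0 then 0 else 1) (if G.dist x c = 0 then 0 else 1)]

lemma fib_card (hκ : 1 ≤ κ) (hconn : G.Connected) (hacyc : G.IsAcyclic)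
    (hdeg : ∀ v : V, (G.neighborSet v).ncard = κ + 1) (x y : V) (a b : ℕ) :
    (Fib G x y a b).ncard = (Fib G x y b a).ncard := by
  by_cases hne1 : (Fib G x y a b).Nonempty
  · exact fib_card_aux hκ hconn hacyc hdeg x y a b hne1
  · by_cases hne2 : (Fib G x y b a).Nonempty
    · exact (fib_card_aux hκ hconn hacyc hdeg x y b a hne2).symm
    · rw [Set.not_nonempty_iff_eq_empty] at hne1 hne2
      rw [hne1, hne2]

/-- the swap bijection -/
lemma exists_dist_swap_equiv (hκ : 1 ≤ κ) (hconn : G.Connected) (hacyc : G.IsAcyclic)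
    (hdeg : ∀ v : V, (G.neighborSet v).ncard = κ + 1) (x y : V) :
    ∃ e : V ≃ V, ∀ z, G.dist x (e z) = G.dist y z ∧ G.dist y (e z) = G.dist x z := by
  classical
  have hg : ∀ a b : ℕ, Nonempty ((Fib G x y a b) ≃ (Fib G x y b a)) := by
    intro a b
    have h1 := fib_finite hκ hconn hacyc hdeg x y a b
    have h2 := fib_finite hκ hconn hacyc hdeg x y b a
    haveI := h1.fintype
    haveI := h2.fintype
    refine ⟨Fintype.equivOfCardEq ?_⟩
    have e1 : Fintype.card (Fib G x y a b) = (Fib G x y a b).ncard := by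
      rw [← Nat.card_coe_set_eq, Nat.card_eq_fintype_card]
    have e2 : Fintype.card (Fib G x y b a) = (Fib G x y b a).ncard := by
      rw [← Nat.card_coe_set_eq, Nat.card_eq_fintype_card]
    rw [e1, e2]
    exact fib_card hκ hconn hacyc hdeg x y a b
  set g : ∀ a b : ℕ, (Fib G x y a b) ≃ (Fib G x y b a) := fun a b => (hg a b).some with hgdef
  set fwd : V → V := fun z => (g (G.dist x z) (G.dist y z) ⟨z, ⟨rfl, rfl⟩⟩).val with hfwd
  set inv : V → V := fun w => ((g (G.dist y w) (G.dist x w)).symm ⟨w, ⟨rfl, rfl⟩⟩).val with hinv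
  have hmemf : ∀ z : V, fwd z ∈ Fib G x y (G.dist y z) (G.dist x z) := fun z =>
    (g (G.dist x z) (G.dist y z) ⟨z, ⟨rfl, rfl⟩⟩).property
  have hmemi : ∀ w : V, inv w ∈ Fib G x y (G.dist y w) (G.dist x w) := fun w =>
    ((g (G.dist y w) (G.dist x w)).symm ⟨w, ⟨rfl, rfl⟩⟩).property
  have inv_eq : ∀ (w : V) (a' b' : ℕ) (hmw : w ∈ Fib G x y b' a'),
      inv w = ((g a' b').symm ⟨w, hmw⟩).val := by
    intro w a' b' hmw
    obtain ⟨h1, h2⟩ := hmw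
    subst h1
    subst h2
    rfl
  have fwd_eq : ∀ (u : V) (a' b' : ℕ) (hmu : u ∈ Fib G x y a' b'),
      fwd u = (g a' b' ⟨u, hmu⟩).val := by
    intro u a' b' hmu
    obtain ⟨h1, h2⟩ := hmu
    subst h1
    subst h2
    rfl
  have hli : ∀ z, inv (fwd z) = z := by
    intro z
    have hw := hmemf z
    rw [inv_eq (fwd z) (G.dist x z) (G.dist y z) hw]
    have : (⟨fwd z, hw⟩ : Fib G x y (G.dist y z) (G.dist x z))
        = g (G.dist x z) (G.dist y z) ⟨z, ⟨rfl, rfl⟩⟩ := Subtype.ext rfl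
    rw [this, Equiv.symm_apply_apply]
  have hri : ∀ w, fwd (inv w) = w := by
    intro w
    have hu := hmemi w
    rw [fwd_eq (inv w) (G.dist y w) (G.dist x w) hu]
    have : (⟨inv w, hu⟩ : Fib G x y (G.dist y w) (G.dist x w))
        = (g (G.dist y w) (G.dist x w)).symm ⟨w, ⟨rfl, rfl⟩⟩ := Subtype.ext rfl
    rw [this, Equiv.apply_symm_apply]
  refine ⟨⟨fwd, inv, hli, hri⟩, fun z => ?_⟩
  have := hmemf z
  exact ⟨this.1, this.2⟩

end Counting

section Analytic

variable {V : Type} [Countable V] [DecidableEq V]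


local notation "ℓ2" => lp (fun _ : V => ℂ) 2

lemma single_eq_smul (z : V) (c : ℂ) :
    lp.single (E := fun _ : V => ℂ) 2 z c = c • lp.single 2 z (1 : ℂ) := by
  rw [← lp.single_smul]; norm_num

/-- coordinate via inner with single -/
lemma inner_single_coord (x : V) (f : ℓ2) :
    (inner ℂ (lp.single 2 x (1 : ℂ)) f : ℂ) = f x := by
  rw [lp.inner_single_left]
  simp [RCLike.inner_apply]

lemma entry_hasSum (A B : ℓ2 →L[ℂ] ℓ2) (x y : V) :
    HasSum (fun z : V => (inner ℂ (lp.single 2 z (1:ℂ)) (B (lp.single 2 y 1)) : ℂ)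
        * (inner ℂ (lp.single 2 x (1:ℂ)) (A (lp.single 2 z 1)) : ℂ))
      (inner ℂ (lp.single 2 x (1:ℂ)) ((A ∘L B) (lp.single 2 y 1)) : ℂ) := by
  set f : ℓ2 := B (lp.single 2 y 1) with hf
  have h1 : HasSum (fun z : V => lp.single 2 z (f z)) f :=
    lp.hasSum_single (by norm_num) f
  have h2 : HasSum (fun z : V => A (lp.single 2 z (f z))) (A f) := A.hasSum h1
  have h3 := (innerSL ℂ (lp.single 2 x (1:ℂ))).hasSum h2
  have hfun : ∀ z : V, ((innerSL ℂ (lp.single 2 x (1:ℂ))) (A (lp.single 2 z (f z))))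
      = (inner ℂ (lp.single 2 z (1:ℂ)) (f : ℓ2) : ℂ) * (inner ℂ (lp.single 2 x (1:ℂ)) (A (lp.single 2 z 1)) : ℂ) := by
    intro z
    rw [single_eq_smul z (f z), A.map_smul]
    simp only [innerSL_apply_apply]
    rw [inner_smul_right, inner_single_coord z f]
  rw [funext hfun] at h3
  exact h3

theorem partA (G : SimpleGraph V)
    (α₁ α₂ : ℕ → ℂ)
    (A₁ A₂ : ℓ2 →L[ℂ] ℓ2)
    (hA₁ : ∀ x y : V,
      (inner ℂ (lp.single 2 x (1 : ℂ)) (A₁ (lp.single 2 y (1 : ℂ))) : ℂ) = α₁ (G.dist x y))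
    (hA₂ : ∀ x y : V,
      (inner ℂ (lp.single 2 x (1 : ℂ)) (A₂ (lp.single 2 y (1 : ℂ))) : ℂ) = α₂ (G.dist x y))
    (hswap : ∀ x y : V, ∃ e : V ≃ V,
      ∀ z, G.dist x (e z) = G.dist y z ∧ G.dist y (e z) = G.dist x z) :
    A₁ ∘L A₂ = A₂ ∘L A₁ := by
  -- entries agree
  have entry : ∀ x y : V, (inner ℂ (lp.single 2 x (1:ℂ)) ((A₁ ∘L A₂) (lp.single 2 y 1)) : ℂ)
      = (inner ℂ (lp.single 2 x (1:ℂ)) ((A₂ ∘L A₁) (lp.single 2 y 1)) : ℂ) := by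
    intro x y
    obtain ⟨e, he⟩ := hswap x y
    have h1 := entry_hasSum A₁ A₂ x y
    have h2 := entry_hasSum A₂ A₁ x y
    simp only [hA₁, hA₂] at h1 h2
    refine Eq.symm (h2.unique ?_)
    have h1' := (Equiv.hasSum_iff e).2 h1
    convert h1' using 2 with z
    simp only [Function.comp_apply]
    have e1 : G.dist (e z) y = G.dist x z := by rw [SimpleGraph.dist_comm]; exact (he z).2
    have e2 : G.dist x (e z) = G.dist z y := by rw [(he z).1, SimpleGraph.dist_comm]
    rw [e1, e2]; ring
  -- entries determine operator
  have key : ∀ (A B : ℓ2 →L[ℂ] ℓ2),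
      (∀ x y : V, (inner ℂ (lp.single 2 x (1:ℂ)) (A (lp.single 2 y 1)) : ℂ)
        = (inner ℂ (lp.single 2 x (1:ℂ)) (B (lp.single 2 y 1)) : ℂ)) → A = B := by
    intro A B h
    have hsing : ∀ y : V, A (lp.single 2 y 1) = B (lp.single 2 y 1) := by
      intro y
      apply lp.ext
      funext x
      have := h x y
      rwa [inner_single_coord, inner_single_coord] at this
    refine ContinuousLinearMap.ext fun f => ?_
    have h1 : HasSum (fun z : V => lp.single 2 z (f z)) f :=
      lp.hasSum_single (by norm_num) f
    have hAf : HasSum (fun z : V => A (lp.single 2 z (f z))) (A f) := A.hasSum h1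
    have hBf : HasSum (fun z : V => B (lp.single 2 z (f z))) (B f) := B.hasSum h1
    have heq : ∀ z : V, A (lp.single 2 z (f z)) = B (lp.single 2 z (f z)) := by
      intro z
      rw [single_eq_smul, _root_.map_smul, _root_.map_smul, hsing]
    rw [funext heq] at hAf
    exact hAf.unique hBf
  exact key _ _ entry

end Analytic

/-- Bounded operators on `ℓ²(V_κ)` induced by radial Toeplitz kernels on a
Cayley tree of order `κ` commute with each other. -/
theorem radial_toeplitz_commute (κ : ℕ) (hκ : 1 ≤ κ) (V : Type) [Countable V] [DecidableEq V]
    (G : SimpleGraph V) (hconn : G.Connected) (hacyc : G.IsAcyclic)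
    (hdeg : ∀ v : V, (G.neighborSet v).ncard = κ + 1)
    (α₁ α₂ : ℕ → ℂ)
    (A₁ A₂ : lp (fun _ : V => ℂ) 2 →L[ℂ] lp (fun _ : V => ℂ) 2)
    (hA₁ : ∀ x y : V,
      (inner ℂ (lp.single 2 x (1 : ℂ)) (A₁ (lp.single 2 y (1 : ℂ))) : ℂ) = α₁ (G.dist x y))
    (hA₂ : ∀ x y : V,
      (inner ℂ (lp.single 2 x (1 : ℂ)) (A₂ (lp.single 2 y (1 : ℂ))) : ℂ) = α₂ (G.dist x y)) :
    A₁ ∘L A₂ = A₂ ∘L A₁ := by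
  refine partA G α₁ α₂ A₁ A₂ hA₁ hA₂ ?_
  intro x y
  exact exists_dist_swap_equiv hκ hconn hacyc hdeg x y

end
end
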